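/- arXiv:1308.6139 — 8 statements merged into one kernel-verified Lean document; each statement's English description precedes it below -/
import Mathlib

section
/- If G is a graph, then the graph J obtained by taking two disjoint copies G1, G2 of G and two disjoint copies H1, H2 of the complement of G, and adding all edges between G1 and H1, all edges between H1 and H2, and all edges between H2 and G2, is self-complementary (i.e., J is isomorphic to its complement). -/
/-- The `P₄`-construction: two copies of `G` (indices 0, 1), two copies of the
complement of `G` (indices 2, 3); all edges between copies 0–2, 2–3, 3–1. -/
def P4Construction {V : Type*} (G : SimpleGraph V) : SimpleGraph (Fin 4 × V) :=
  SimpleGraph.fromRel (fun p q =>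
    (p.1 = q.1 ∧ (p.1 = 0 ∨ p.1 = 1) ∧ G.Adj p.2 q.2) ∨
    (p.1 = q.1 ∧ (p.1 = 2 ∨ p.1 = 3) ∧ ¬ G.Adj p.2 q.2) ∨
    (p.1 = 0 ∧ q.1 = 2) ∨ (p.1 = 2 ∧ q.1 = 3) ∨ (p.1 = 3 ∧ q.1 = 1))

def SelfComplementary {V : Type*} (G : SimpleGraph V) : Prop := Nonempty (G ≃g Gᶜ)

/-!
`P4Construction G` is the lexicographic sum `P₄[G, G, Gᶜ, Gᶜ]` over the path `0 – 2 – 3 – 1`.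
Complementing a lexicographic sum complements the index graph and every block, and `P₄` has an
isomorphism onto its complement exchanging the two `G`-blocks with the two `Gᶜ`-blocks; carried
blockwise, it is an isomorphism of the construction onto its complement.
-/

namespace SimpleGraph

variable {ι V : Type*}

/-- The lexicographic sum `H[G i]`, with block `{i} × V` carrying `G i`. -/
def lexSum (H : SimpleGraph ι) (G : ι → SimpleGraph V) : SimpleGraph (ι × V) where
  Adj p q := H.Adj p.1 q.1 ∨ (p.1 = q.1 ∧ (G p.1).Adj p.2 q.2)
  symm := ⟨fun p q => by
    rintro (h | ⟨h, hG⟩)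
    · exact .inl h.symm
    · exact .inr ⟨h.symm, h ▸ hG.symm⟩⟩
  loopless := ⟨fun p => by
    rintro (h | ⟨-, hG⟩)
    · exact h.ne rfl
    · exact hG.ne rfl⟩

theorem compl_lexSum (H : SimpleGraph ι) (G : ι → SimpleGraph V) :
    (H.lexSum G)ᶜ = Hᶜ.lexSum fun i => (G i)ᶜ := by
  ext ⟨i, v⟩ ⟨j, w⟩
  simp only [compl_adj, lexSum, ne_eq, Prod.mk.injEq]
  by_cases hij : i = j
  · subst hij; simp
  · simp [hij]

def Iso.lexSum {ι' : Type*} {H : SimpleGraph ι} {H' : SimpleGraph ι'} {G : ι → SimpleGraph V}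
    {G' : ι' → SimpleGraph V} (φ : H ≃g H') (hG : ∀ i, G' (φ i) = G i) :
    H.lexSum G ≃g H'.lexSum G' where
  toEquiv := φ.toEquiv.prodCongr (Equiv.refl V)
  map_rel_iff' := by simp [SimpleGraph.lexSum, hG, φ.map_adj_iff]

theorem selfComplementary_lexSum {H : SimpleGraph ι} {G : ι → SimpleGraph V} (φ : H ≃g Hᶜ)
    (hG : ∀ i, (G (φ i))ᶜ = G i) : SelfComplementary (H.lexSum G) :=
  ⟨compl_lexSum H G ▸ φ.lexSum hG⟩

end SimpleGraph

open SimpleGraph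

def p4Skeleton : SimpleGraph (Fin 4) := fromEdgeSet {s(0, 2), s(2, 3), s(3, 1)}

def p4SkeletonIsoCompl : p4Skeleton ≃g p4Skeletonᶜ where
  toFun := ![3, 2, 0, 1]
  invFun := ![2, 3, 1, 0]
  left_inv := by decide
  right_inv := by decide
  map_rel_iff' := by simp only [p4Skeleton]; decide

theorem p4Construction_eq_lexSum {V : Type*} (G : SimpleGraph V) :
    P4Construction G = p4Skeleton.lexSum ![G, G, Gᶜ, Gᶜ] := by
  ext ⟨i, v⟩ ⟨j, w⟩
  fin_cases i <;> fin_cases j <;> simp [P4Construction, lexSum, p4Skeleton, G.adj_comm v w] <;>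
    exact fun h => h.ne'

theorem p4Construction_selfComplementary {V : Type*} (G : SimpleGraph V) :
    SelfComplementary (P4Construction G) := by
  rw [p4Construction_eq_lexSum]
  exact selfComplementary_lexSum p4SkeletonIsoCompl fun i => by
    fin_cases i <;> simp [p4SkeletonIsoCompl]
end

section
/- If τ is an antimorphism of a graph G, then every cycle of τ (viewed as a permutation) has length a multiple of 4, except possibly for one fixed point. In particular τ has at most one fixed point. -/
/-!
Odd powers of an antimorphism are again antimorphisms, and an antimorphism cannot map a pair
`{a, b}` of distinct vertices onto itself, since it would have to flip its adjacency. If `x` has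
period `n ≥ 2`, then `τ ^ n` fixes the pair `{x, τ x}`, so `n = 2m` is even; and `τ ^ m` swaps
`x` and `τ ^ m x`, so `m` is even too. Two fixed points would form a pair fixed by `τ` itself.
-/

def IsAntimorphism {V : Type*} (G : SimpleGraph V) (τ : Equiv.Perm V) : Prop :=
  ∀ a b : V, a ≠ b → (G.Adj a b ↔ ¬ G.Adj (τ a) (τ b))

open Function

namespace Equiv.Perm

variable {α : Type*} [Fintype α] [DecidableEq α]

theorem pow_apply_eq_self_iff_card_support_cycleOf_dvd {f : Perm α} {x : α} (hx : f x ≠ x)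
    (m : ℕ) : (f ^ m) x = x ↔ (f.cycleOf x).support.card ∣ m := by
  have hcyc : (f.cycleOf x).IsCycle := isCycle_cycleOf f hx
  rw [← cycleOf_pow_apply_self, ← hcyc.pow_eq_one_iff' (by rwa [cycleOf_apply_self]),
    ← hcyc.orderOf, orderOf_dvd_iff_pow_eq_one]

theorem minimalPeriod_eq_card_support_cycleOf {f : Perm α} {x : α} (hx : f x ≠ x) :
    minimalPeriod f x = (f.cycleOf x).support.card := by
  have hiff := pow_apply_eq_self_iff_card_support_cycleOf_dvd hx
  refine Nat.dvd_antisymm ?_ ?_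
  · refine IsPeriodicPt.minimalPeriod_dvd ?_
    rw [IsPeriodicPt, IsFixedPt, iterate_eq_pow, hiff]
  · rw [← hiff, ← iterate_eq_pow]
    exact iterate_minimalPeriod

end Equiv.Perm

namespace IsAntimorphism

variable {V : Type*} {G : SimpleGraph V} {τ : Equiv.Perm V}

theorem adj_pow_apply_iff (hτ : IsAntimorphism G τ) {a b : V} (hab : a ≠ b) (k : ℕ) :
    G.Adj ((τ ^ k) a) ((τ ^ k) b) ↔ (G.Adj a b ↔ Even k) := by
  induction k with
  | zero => simp
  | succ k ih =>
    have hne : (τ ^ k) a ≠ (τ ^ k) b := (τ ^ k).injective.ne hab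
    rw [pow_succ', Equiv.Perm.mul_apply, Equiv.Perm.mul_apply, Nat.even_add_one]
    have hflip := hτ _ _ hne
    tauto

theorem pow (hτ : IsAntimorphism G τ) {k : ℕ} (hk : Odd k) : IsAntimorphism G (τ ^ k) :=
  fun a b hab => by
    have hk' : ¬Even k := Nat.not_even_iff_odd.mpr hk
    rw [hτ.adj_pow_apply_iff hab]
    tauto

theorem mk_apply_ne (hτ : IsAntimorphism G τ) {a b : V} (hab : a ≠ b) :
    s(τ a, τ b) ≠ s(a, b) := by
  intro h
  have hflip := hτ a b hab
  rcases Sym2.eq_iff.mp h with ⟨ha, hb⟩ | ⟨ha, hb⟩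
  · rw [ha, hb] at hflip
    tauto
  · rw [ha, hb, G.adj_comm b a] at hflip
    tauto

theorem eq_of_isFixedPt (hτ : IsAntimorphism G τ) {x y : V} (hx : IsFixedPt τ x)
    (hy : IsFixedPt τ y) : x = y := by
  by_contra hxy
  exact hτ.mk_apply_ne hxy (by rw [hx.eq, hy.eq])

theorem four_dvd_minimalPeriod (hτ : IsAntimorphism G τ) {x : V} (hx : τ x ≠ x) :
    4 ∣ minimalPeriod τ x := by
  set n := minimalPeriod τ x
  have hperiodic : (τ ^ n) x = x := by
    rw [← Equiv.Perm.iterate_eq_pow]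
    exact iterate_minimalPeriod
  obtain ⟨m, hnm⟩ : Even n := by
    by_contra hodd
    have hfix : (τ ^ n) (τ x) = τ x := by
      rw [← Equiv.Perm.mul_apply, ← pow_succ, pow_succ', Equiv.Perm.mul_apply, hperiodic]
    exact (hτ.pow (Nat.not_even_iff_odd.mp hodd)).mk_apply_ne hx.symm
      (by rw [hperiodic, hfix])
  obtain ⟨j, hmj⟩ : Even m := by
    by_contra hodd
    have hm : 0 < m := by grind
    have hmove : (τ ^ m) x ≠ x := by
      intro h
      have hle : n ≤ m := IsPeriodicPt.minimalPeriod_le hm (by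
        rwa [IsPeriodicPt, IsFixedPt, Equiv.Perm.iterate_eq_pow])
      omega
    have hback : (τ ^ m) ((τ ^ m) x) = x := by
      rw [← Equiv.Perm.mul_apply, ← pow_add, ← hnm, hperiodic]
    exact (hτ.pow (Nat.not_even_iff_odd.mp hodd)).mk_apply_ne hmove.symm
      (by rw [hback, Sym2.eq_swap])
  exact ⟨j, by omega⟩

end IsAntimorphism

theorem antimorphism_cycle_lengths {V : Type*} [Fintype V] [DecidableEq V]
    (G : SimpleGraph V) (τ : Equiv.Perm V) (hτ : IsAntimorphism G τ) :
    (∀ x : V, τ x ≠ x → 4 ∣ (τ.cycleOf x).support.card) ∧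
    (∀ x y : V, τ x = x → τ y = y → x = y) := by
  refine ⟨fun x hx => ?_, fun x y hx hy => hτ.eq_of_isFixedPt hx hy⟩
  rw [← Equiv.Perm.minimalPeriod_eq_card_support_cycleOf hx]
  exact hτ.four_dvd_minimalPeriod hx
end

section
/- Let G be a self-complementary graph with an antimorphism τ containing a cycle (a_1 b_1 c_1 d_1 a_2 b_2 c_2 d_2 ... a_k b_k c_k d_k) of length 4k. Then either there exists i such that {a_1, b_1, a_i, b_i} induces a P_4 for which (a_1 b_1 a_i b_i) is an antimorphism of the induced subgraph, or there exists i such that {a_1, b_1, c_i, d_i} induces a P_4 for which (a_1 b_1 c_i d_i) is an antimorphism of the induced subgraph. -/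
/-- `s` induces a path on 4 vertices in `G`. -/
def InducesP4 {V : Type*} (G : SimpleGraph V) (s : Set V) : Prop :=
  ∃ w x y z : V, s = {w, x, y, z} ∧ w ≠ x ∧ w ≠ y ∧ w ≠ z ∧ x ≠ y ∧ x ≠ z ∧ y ≠ z ∧
    G.Adj w x ∧ G.Adj x y ∧ G.Adj y z ∧ ¬ G.Adj w y ∧ ¬ G.Adj w z ∧ ¬ G.Adj x z

/-- The cyclic permutation `(p q r s)` (as a function). -/
def cyc4 {V : Type*} [DecidableEq V] (p q r s : V) : V → V :=
  fun v => if v = p then q else if v = q then r else if v = r then s else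
    if v = s then p else v

/-- `{p,q,r,s}` induces a `P₄` for which the cyclic permutation `(p q r s)` is an
antimorphism of the induced subgraph. -/
def IsP4Antimorphic {V : Type*} [DecidableEq V] (G : SimpleGraph V) (p q r s : V) : Prop :=
  InducesP4 G {p, q, r, s} ∧
  ∀ x ∈ ({p, q, r, s} : Set V), ∀ y ∈ ({p, q, r, s} : Set V), x ≠ y →
    (G.Adj x y ↔ ¬ G.Adj (cyc4 p q r s x) (cyc4 p q r s y))


theorem IsAntimorphism.adj_apply_apply_iff {V : Type*} {G : SimpleGraph V} {τ : Equiv.Perm V}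
    (hτ : IsAntimorphism G τ) (x y : V) : G.Adj (τ (τ x)) (τ (τ y)) ↔ G.Adj x y := by
  by_cases hxy : x = y
  · simp [hxy]
  · rw [hτ x y hxy, hτ (τ x) (τ y) (τ.injective.ne hxy), not_not]

theorem ZMod.iff_of_forall_iff_add_one {k : ℕ} {P : ZMod k → Prop}
    (h : ∀ x, P x ↔ P (x + 1)) (x y : ZMod k) : P x ↔ P y := by
  suffices ∀ n : ℤ, P x ↔ P (x + n) by
    obtain ⟨n, hn⟩ := ZMod.intCast_surjective (y - x)
    rw [this n, hn, add_sub_cancel]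
  intro n
  induction n using Int.induction_on with
  | zero => simp
  | succ n ih => rw [ih, h]; push_cast; ring_nf
  | pred n ih => rw [ih, h (x + (-n - 1 : ℤ))]; push_cast; ring_nf

theorem ZMod.forall_of_zero_of_add_one {k : ℕ} [NeZero k] {P : ZMod k → Prop} (h₀ : P 0)
    (h : ∀ x, x + 1 ≠ 0 → P x → P (x + 1)) (x : ZMod k) : P x := by
  suffices ∀ n < k, P n by simpa using this x.val (ZMod.val_lt x)
  intro n
  induction n with
  | zero => exact fun _ => by simpa using h₀
  | succ n ih =>
    intro hn
    have hne : (n : ZMod k) + 1 ≠ 0 := by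
      rw [← Nat.cast_succ, ne_eq, ZMod.natCast_eq_zero_iff]
      exact fun hdvd => absurd (Nat.le_of_dvd n.succ_pos hdvd) (by omega)
    simpa using h n hne (ih (by omega))

section Cyc4

variable {V : Type*} [DecidableEq V] {p q r s : V}

theorem cyc4_apply_first : cyc4 p q r s p = q := by simp [cyc4]

theorem cyc4_apply_second (hpq : p ≠ q) : cyc4 p q r s q = r := by simp [cyc4, hpq.symm]

theorem cyc4_apply_third (hpr : p ≠ r) (hqr : q ≠ r) : cyc4 p q r s r = s := by
  simp [cyc4, hpr.symm, hqr.symm]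

theorem cyc4_apply_fourth (hps : p ≠ s) (hqs : q ≠ s) (hrs : r ≠ s) : cyc4 p q r s s = p := by
  simp [cyc4, hps.symm, hqs.symm, hrs.symm]

theorem isP4Antimorphic_of_adj_iff (G : SimpleGraph V)
    (hpq : p ≠ q) (hpr : p ≠ r) (hps : p ≠ s) (hqr : q ≠ r) (hqs : q ≠ s) (hrs : r ≠ s)
    (h₁ : G.Adj p q ↔ ¬ G.Adj q r) (h₂ : G.Adj q r ↔ ¬ G.Adj r s)
    (h₃ : G.Adj r s ↔ ¬ G.Adj s p) (h₄ : G.Adj p r ↔ ¬ G.Adj q s) :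
    IsP4Antimorphic G p q r s := by
  refine ⟨?_, ?_⟩
  · rw [G.adj_comm s p] at h₃
    by_cases e : G.Adj p q <;> by_cases f : G.Adj p r
    · refine ⟨q, p, r, s, by ext; simp; tauto, hpq.symm, hqr, hqs, hpr, hps, hrs, ?_⟩
      rw [G.adj_comm q p]
      tauto
    · refine ⟨p, q, s, r, by ext; simp; tauto, hpq, hps, hpr, hqs, hqr, hrs.symm, ?_⟩
      rw [G.adj_comm s r]
      tauto
    · refine ⟨q, r, p, s, by ext; simp; tauto, hqr, hpq.symm, hqs, hpr.symm, hrs, hps, ?_⟩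
      rw [G.adj_comm r p, G.adj_comm q p]
      tauto
    · refine ⟨r, q, s, p, by ext; simp; tauto, hqr.symm, hrs, hpr.symm, hqs, hpq.symm,
        hps.symm, ?_⟩
      rw [G.adj_comm r q, G.adj_comm s p, G.adj_comm r p, G.adj_comm q p]
      tauto
  · intro x hx y hy hxy
    simp only [Set.mem_insert_iff, Set.mem_singleton_iff] at hx hy
    rcases hx with rfl | rfl | rfl | rfl <;> rcases hy with rfl | rfl | rfl | rfl <;>
      simp only [cyc4_apply_first, cyc4_apply_second hpq, cyc4_apply_third hpr hqr,
        cyc4_apply_fourth hps hqs hrs] <;>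
      first
      | exact absurd rfl hxy
      | simp only [G.adj_comm] at *; tauto

end Cyc4

namespace AntimorphismCycle

variable {V : Type*} {k : ℕ} {a b c d : ZMod k → V}

theorem a_ne_b
    (hinj : Function.Injective (fun p : Fin 4 × ZMod k => ![a, b, c, d] p.1 p.2))
    (i j : ZMod k) : a i ≠ b j :=
  hinj.ne (a₁ := (0, i)) (a₂ := (1, j)) (by simp)

theorem a_ne_c
    (hinj : Function.Injective (fun p : Fin 4 × ZMod k => ![a, b, c, d] p.1 p.2))
    (i j : ZMod k) : a i ≠ c j :=
  hinj.ne (a₁ := (0, i)) (a₂ := (2, j)) (by simp)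

theorem a_ne_d
    (hinj : Function.Injective (fun p : Fin 4 × ZMod k => ![a, b, c, d] p.1 p.2))
    (i j : ZMod k) : a i ≠ d j :=
  hinj.ne (a₁ := (0, i)) (a₂ := (3, j)) (by simp)

theorem b_ne_c
    (hinj : Function.Injective (fun p : Fin 4 × ZMod k => ![a, b, c, d] p.1 p.2))
    (i j : ZMod k) : b i ≠ c j :=
  hinj.ne (a₁ := (1, i)) (a₂ := (2, j)) (by simp)

theorem b_ne_d
    (hinj : Function.Injective (fun p : Fin 4 × ZMod k => ![a, b, c, d] p.1 p.2))
    (i j : ZMod k) : b i ≠ d j :=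
  hinj.ne (a₁ := (1, i)) (a₂ := (3, j)) (by simp)

theorem c_ne_d
    (hinj : Function.Injective (fun p : Fin 4 × ZMod k => ![a, b, c, d] p.1 p.2))
    (i j : ZMod k) : c i ≠ d j :=
  hinj.ne (a₁ := (2, i)) (a₂ := (3, j)) (by simp)

theorem a_ne_a
    (hinj : Function.Injective (fun p : Fin 4 × ZMod k => ![a, b, c, d] p.1 p.2))
    {i j : ZMod k} (h : i ≠ j) : a i ≠ a j :=
  hinj.ne (a₁ := (0, i)) (a₂ := (0, j)) (by simpa)

theorem b_ne_b
    (hinj : Function.Injective (fun p : Fin 4 × ZMod k => ![a, b, c, d] p.1 p.2))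
    {i j : ZMod k} (h : i ≠ j) : b i ≠ b j :=
  hinj.ne (a₁ := (1, i)) (a₂ := (1, j)) (by simpa)

variable {G : SimpleGraph V} {τ : Equiv.Perm V}

theorem adj_iff_adj_zero_sub (hτ : IsAntimorphism G τ) (hab : ∀ i, τ (a i) = b i)
    (hbc : ∀ i, τ (b i) = c i) (hcd : ∀ i, τ (c i) = d i) (hda : ∀ i, τ (d i) = a (i + 1))
    (i j : ZMod k) : G.Adj (a j) (b i) ↔ G.Adj (a 0) (b (i - j)) := by
  have shift : ∀ x y, G.Adj (a x) (b y) ↔ G.Adj (a (x + 1)) (b (y + 1)) := fun x y => by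
    have h_cd := hτ.adj_apply_apply_iff (a x) (b y)
    have h_ab := hτ.adj_apply_apply_iff (c x) (d y)
    simp only [hab, hbc, hcd, hda] at h_cd h_ab
    exact h_cd.symm.trans h_ab.symm
  have := ZMod.iff_of_forall_iff_add_one (P := fun x => G.Adj (a x) (b (x + (i - j))))
    (fun x => by rw [shift, add_right_comm]) j 0
  simpa using this

theorem isP4Antimorphic_zero_zero_c_d [DecidableEq V] (hτ : IsAntimorphism G τ)
    (hinj : Function.Injective (fun p : Fin 4 × ZMod k => ![a, b, c, d] p.1 p.2))
    (hab : ∀ i, τ (a i) = b i) (hbc : ∀ i, τ (b i) = c i) (hcd : ∀ i, τ (c i) = d i)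
    (hda : ∀ i, τ (d i) = a (i + 1)) {i : ZMod k}
    (hi : G.Adj (a 0) (b i) ↔ G.Adj (a 0) (b 0))
    (hi' : G.Adj (a 0) (b (-i - 1)) ↔ G.Adj (a 0) (b 0)) :
    IsP4Antimorphic G (a 0) (b 0) (c i) (d i) := by
  have h_ab_bc := hτ _ _ (a_ne_b hinj 0 i)
  have h_cd_ab : G.Adj (c i) (d i) ↔ G.Adj (a 0) (b 0) := by
    have := hτ.adj_apply_apply_iff (a i) (b i)
    simp only [hab, hbc, hcd] at this
    rw [this, adj_iff_adj_zero_sub hτ hab hbc hcd hda, sub_self]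
  have h_da_ab := hτ _ _ (a_ne_d hinj 0 i).symm
  have h_ab_shift := adj_iff_adj_zero_sub hτ hab hbc hcd hda 0 (i + 1)
  rw [hab, hbc] at h_ab_bc
  rw [hda, hab] at h_da_ab
  rw [zero_sub, neg_add'] at h_ab_shift
  apply isP4Antimorphic_of_adj_iff G (a_ne_b hinj 0 0) (a_ne_c hinj 0 i) (a_ne_d hinj 0 i)
    (b_ne_c hinj 0 i) (b_ne_d hinj 0 i) (c_ne_d hinj i i)
  · tauto
  · tauto
  · tauto
  · simpa only [hab, hcd] using hτ _ _ (a_ne_c hinj 0 i)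

theorem isP4Antimorphic_zero_zero_a_b [DecidableEq V] (hτ : IsAntimorphism G τ)
    (hinj : Function.Injective (fun p : Fin 4 × ZMod k => ![a, b, c, d] p.1 p.2))
    (hab : ∀ i, τ (a i) = b i) (hbc : ∀ i, τ (b i) = c i) (hcd : ∀ i, τ (c i) = d i)
    (hda : ∀ i, τ (d i) = a (i + 1)) {i : ZMod k} (hi₀ : i ≠ 0)
    (hi : ¬(G.Adj (a 0) (b i) ↔ G.Adj (a 0) (b 0)))
    (hi' : ¬(G.Adj (a 0) (b (-i)) ↔ G.Adj (a 0) (b 0))) :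
    IsP4Antimorphic G (a 0) (b 0) (a i) (b i) := by
  have h_ab := adj_iff_adj_zero_sub hτ hab hbc hcd hda i i
  have h_ba := adj_iff_adj_zero_sub hτ hab hbc hcd hda 0 i
  rw [sub_self] at h_ab
  rw [zero_sub, ← G.adj_comm] at h_ba
  apply isP4Antimorphic_of_adj_iff G (a_ne_b hinj 0 0) (a_ne_a hinj hi₀.symm) (a_ne_b hinj 0 i)
    (a_ne_b hinj i 0).symm (b_ne_b hinj hi₀.symm) (a_ne_b hinj i i)
  · tauto
  · tauto
  · rw [G.adj_comm (b i)]
    tauto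
  · simpa only [hab] using hτ _ _ (a_ne_a hinj hi₀.symm)

end AntimorphismCycle

open AntimorphismCycle in
/-- Gibbs' lemma: given an antimorphism with a cycle
`(a₀ b₀ c₀ d₀ a₁ b₁ c₁ d₁ … a_{k-1} b_{k-1} c_{k-1} d_{k-1})`, either some
`{a₀, b₀, aᵢ, bᵢ}` induces a `P₄` with `(a₀ b₀ aᵢ bᵢ)` as antimorphism, or some
`{a₀, b₀, cᵢ, dᵢ}` induces a `P₄` with `(a₀ b₀ cᵢ dᵢ)` as antimorphism. -/
theorem gibbs_lemma {V : Type*} [DecidableEq V] (G : SimpleGraph V) (τ : Equiv.Perm V)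
    (hτ : IsAntimorphism G τ) (k : ℕ) (hk : 1 ≤ k) (a b c d : ZMod k → V)
    (hinj : Function.Injective (fun p : Fin 4 × ZMod k => ![a, b, c, d] p.1 p.2))
    (hab : ∀ i, τ (a i) = b i) (hbc : ∀ i, τ (b i) = c i)
    (hcd : ∀ i, τ (c i) = d i) (hda : ∀ i, τ (d i) = a (i + 1)) :
    (∃ i : ZMod k, IsP4Antimorphic G (a 0) (b 0) (a i) (b i)) ∨
    (∃ i : ZMod k, IsP4Antimorphic G (a 0) (b 0) (c i) (d i)) := by
  have : NeZero k := ⟨by omega⟩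
  by_contra! h
  obtain ⟨no_a_b, no_c_d⟩ := h
  let good : ZMod k → Prop := fun i => G.Adj (a 0) (b i) ↔ G.Adj (a 0) (b 0)
  have good_c_d : ∀ i, good i → ¬ good (-i - 1) := fun i hi hi' =>
    no_c_d i (isP4Antimorphic_zero_zero_c_d hτ hinj hab hbc hcd hda hi hi')
  have good_a_b : ∀ i, i ≠ 0 → ¬ good i → good (-i) := fun i hi₀ hi => by_contra fun hi' =>
    no_a_b i (isP4Antimorphic_zero_zero_a_b hτ hinj hab hbc hcd hda hi₀ hi hi')
  have good_succ : ∀ i, i + 1 ≠ 0 → good i → good (i + 1) := fun i hi hgood => by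
    have := good_a_b (-i - 1) (by rwa [← neg_add', neg_ne_zero]) (good_c_d i hgood)
    rwa [← neg_add', neg_neg] at this
  have good_neg_one := ZMod.forall_of_zero_of_add_one (P := good) Iff.rfl good_succ (-1)
  exact good_c_d 0 Iff.rfl (by simpa using good_neg_one)
end

section
/- Every self-complementary graph on 4k vertices contains k pairwise vertex-disjoint induced paths on 4 vertices; equivalently, its vertex set can be partitioned into k sets of 4 vertices each inducing a P_4. -/
/-!
An isomorphism `G ≃g Gᶜ` is a permutation `σ` exchanging edges and non-edges, so even powers
of `σ` are automorphisms and odd powers are antimorphisms. Consequently every cycle of `σ` of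
length `> 1` has length `4m`, and `σ` has at most one fixed point, which cannot exist when the
number of vertices is divisible by `4`.

Along a cycle `x j = σ ^ j x`, the vertices `x i` and `x j` are adjacent iff `f (j - i)` holds
for even `i`, and iff it fails for odd `i`, where `f t` means `x 0 ~ x t`. On odd arguments `f`
is `4m`-periodic and satisfies `f (-t) ↔ ¬ f t`; repeatedly halving `m` yields an odd `r` and a
divisor `p` of `m` with `f (r ± 2p) ↔ ¬ f r`. Then for every even `i` the vertices
`x i, x (i + r), x (i + 2p), x (i + 2p + r)` induce a `P_4`, and the `m` such quadruples with
`i mod 4p ∈ {0, 2, …, 2p - 2}` partition the cycle.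
-/

open Finset Function Equiv

lemma InducesP4.card_eq {V : Type*} {G : SimpleGraph V} {p : Finset V} (hp : InducesP4 G p) :
    #p = 4 := by
  classical
  obtain ⟨w, x, y, z, hwxyz, hwx, hwy, hwz, hxy, hxz, hyz, -⟩ := hp
  exact card_eq_four.mpr
    ⟨w, x, y, z, hwx, hwy, hwz, hxy, hxz, hyz, coe_injective (by push_cast; exact hwxyz)⟩

lemma inducesP4_of_adj_iff {V : Type*} {G : SimpleGraph V} {a b c d : V} (hab : a ≠ b)
    (hac : a ≠ c) (had : a ≠ d) (hbc : b ≠ c) (hbd : b ≠ d) (hcd : c ≠ d)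
    (hcd_ab : G.Adj c d ↔ G.Adj a b) (had_ab : G.Adj a d ↔ ¬ G.Adj a b)
    (hbc_ab : G.Adj b c ↔ ¬ G.Adj a b) (hbd_ac : G.Adj b d ↔ ¬ G.Adj a c) :
    InducesP4 G {a, b, c, d} := by
  by_cases h₁ : G.Adj a b <;> by_cases h₂ : G.Adj a c
  · refine ⟨b, a, c, d, by ext; simp only [Set.mem_insert_iff, Set.mem_singleton_iff]; tauto,
      hab.symm, hbc, hbd, hac, had, hcd, h₁.symm, h₂, hcd_ab.mpr h₁, ?_, ?_, ?_⟩ <;> tauto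
  · refine ⟨a, b, d, c, by ext; simp only [Set.mem_insert_iff, Set.mem_singleton_iff]; tauto,
      hab, had, hac, hbd, hbc, hcd.symm, h₁, hbd_ac.mpr h₂, (hcd_ab.mpr h₁).symm, ?_, h₂, ?_⟩ <;>
      tauto
  · refine ⟨d, a, c, b, by ext; simp only [Set.mem_insert_iff, Set.mem_singleton_iff]; tauto,
      had.symm, hcd.symm, hbd.symm, hac, hab, hbc.symm, (had_ab.mpr h₁).symm, h₂,
      (hbc_ab.mpr h₁).symm, fun h => h₁ (hcd_ab.mp h.symm), ?_, h₁⟩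
    rw [G.adj_comm]; tauto
  · refine ⟨a, d, b, c, by ext; simp only [Set.mem_insert_iff, Set.mem_singleton_iff]; tauto,
      had, hab, hac, hbd.symm, hcd.symm, hbc, had_ab.mpr h₁, (hbd_ac.mpr h₂).symm, hbc_ab.mpr h₁,
      h₁, h₂, fun h => h₁ (hcd_ab.mp h.symm)⟩

lemma exists_odd_flip_add_sub (f : ℤ → Prop) (m : ℕ) (hm : 0 < m)
    (hper : ∀ t, Odd t → (f (t + 4 * m) ↔ f t)) (hneg : ∀ t, Odd t → (f (-t) ↔ ¬ f t)) :
    ∃ (r : ℤ) (p : ℕ), Odd r ∧ 0 < p ∧ p ∣ m ∧ (f (r + 2 * p) ↔ ¬ f r) ∧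
      (f (r - 2 * p) ↔ ¬ f r) := by
  induction m using Nat.strong_induction_on with
  | _ m ih =>
    by_cases hflip : ∃ r, Odd r ∧ ¬ (f (r + 2 * m) ↔ f r)
    · obtain ⟨r, hr, hne⟩ := hflip
      have hsub := hper (r - 2 * m) (hr.sub_even ⟨m, by ring⟩)
      rw [show r - 2 * m + 4 * m = r + 2 * m by ring] at hsub
      exact ⟨r, m, hr, hm, dvd_rfl, by tauto, by tauto⟩
    push Not at hflip
    obtain ⟨m', rfl | rfl⟩ := Nat.even_or_odd' m
    · obtain ⟨r, p, hr, hp, hpm, hflip'⟩ := ih m' (by omega) (by omega)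
        (fun t ht => by rw [← hflip t ht]; push_cast; ring_nf)
      exact ⟨r, p, hr, hp, hpm.mul_left 2, hflip'⟩
    · -- `-m` and `m` differ by `2 m`, yet `f` takes opposite values there
      have := hflip (-(2 * m' + 1)) ⟨-m' - 1, by ring⟩
      rw [hneg _ ⟨m', rfl⟩] at this
      push_cast at this
      rw [show -(2 * (m' : ℤ) + 1) + 2 * (2 * m' + 1) = 2 * m' + 1 by ring] at this
      tauto

lemma Int.not_dvd_of_even_of_odd {n t : ℤ} (hn : Even n) (ht : Odd t) : ¬ n ∣ t :=
  fun ⟨c, hc⟩ => Int.not_even_iff_odd.mpr (hc ▸ ht) (hn.mul_right c)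

lemma eq_of_dvd_two_mul_add_odd_mul {M y y' δ δ' : ℕ} {r : ℤ} (hr : Odd r) (hy : y < 2 * M)
    (hy' : y' < 2 * M) (hδ : δ < 2) (hδ' : δ' < 2)
    (hdvd : (4 * M : ℤ) ∣ (2 * y + r * δ) - (2 * y' + r * δ')) : y = y' ∧ δ = δ' := by
  obtain ⟨k, rfl⟩ := hr
  have h2 : (2 : ℤ) ∣ (2 * y + (2 * k + 1) * δ) - (2 * y' + (2 * k + 1) * δ') :=
    dvd_trans ⟨2 * M, by ring⟩ hdvd
  have hδδ' : δ = δ' := by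
    interval_cases δ <;> interval_cases δ' <;> first | rfl | (exfalso; omega)
  subst hδδ'
  have h0 := Int.eq_zero_of_abs_lt_dvd hdvd (by rw [abs_lt]; constructor <;> linarith)
  exact ⟨by linarith, rfl⟩

lemma Finpartition.exists_of_injective_prod {ι κ α : Type*} [Fintype ι] [Fintype κ] [Nonempty κ]
    [DecidableEq α] {Φ : ι × κ → α} (hΦ : Injective Φ) :
    ∃ P : Finpartition (univ.image Φ), ∀ p ∈ P.parts, ∃ i, p = univ.image fun c => Φ (i, c) := by
  refine ⟨.ofExistsUnique (univ.image fun i => univ.image fun c => Φ (i, c)) ?_ ?_ ?_,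
    fun p hp => ?_⟩
  · simp only [mem_image, mem_univ, true_and, forall_exists_index, forall_apply_eq_imp_iff]
    exact fun i => image_subset_iff.mpr fun c _ => mem_image_of_mem Φ (mem_univ _)
  · simp only [mem_image, mem_univ, true_and, forall_exists_index, forall_apply_eq_imp_iff]
    rintro ⟨i, c⟩
    refine ⟨_, ⟨⟨i, rfl⟩, mem_image_of_mem _ (mem_univ c)⟩, ?_⟩
    rintro _ ⟨⟨j, rfl⟩, hj⟩
    obtain ⟨d, -, hd⟩ := mem_image.mp hj
    rw [(Prod.mk.inj (hΦ hd)).1]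
  · simp only [mem_image, mem_univ, true_and, not_exists, ← nonempty_iff_ne_empty]
    exact fun i => univ_nonempty.image _
  · simpa [eq_comm] using hp

namespace SimpleGraph

variable {V : Type*} {G : SimpleGraph V}

def IsAntimorphism (G : SimpleGraph V) (σ : Perm V) : Prop :=
  ∀ ⦃u v : V⦄, u ≠ v → (G.Adj (σ u) (σ v) ↔ ¬ G.Adj u v)

lemma Iso.isAntimorphism (φ : G ≃g Gᶜ) : G.IsAntimorphism φ.toEquiv := fun u v huv => by
  have hφ : φ u ≠ φ v := φ.injective.ne huv
  simpa [compl_adj, hφ] using (φ.map_adj_iff (v := u) (w := v)).not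

namespace IsAntimorphism

variable {σ : Perm V} (h : G.IsAntimorphism σ)
include h

lemma adj_zpow_iff (j : ℤ) {u v : V} (huv : u ≠ v) :
    G.Adj ((σ ^ j) u) ((σ ^ j) v) ↔ (G.Adj u v ↔ Even j) := by
  have step : ∀ j : ℤ, G.Adj ((σ ^ (j + 1)) u) ((σ ^ (j + 1)) v) ↔
      ¬ G.Adj ((σ ^ j) u) ((σ ^ j) v) := fun j => by
    rw [add_comm, zpow_one_add, Perm.mul_apply, Perm.mul_apply]
    exact h ((σ ^ j).injective.ne huv)
  induction j using Int.induction_on with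
  | zero => simp
  | succ j ih =>
    rw [step, Int.even_add_one]
    tauto
  | pred j ih =>
    have := step (-j - 1)
    rw [sub_add_cancel] at this
    rw [Int.even_sub_one]
    tauto

lemma adj_zpow_apply_zpow_apply (a : V) {i j : ℤ} (hij : (σ ^ i) a ≠ (σ ^ j) a) :
    G.Adj ((σ ^ i) a) ((σ ^ j) a) ↔ (G.Adj a ((σ ^ (j - i)) a) ↔ Even i) := by
  have hj : (σ ^ j) a = (σ ^ i) ((σ ^ (j - i)) a) := by
    rw [← Perm.mul_apply, ← zpow_add, add_sub_cancel]
  rw [hj] at hij ⊢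
  exact h.adj_zpow_iff i fun ha => hij (congrArg _ ha)

lemma eq_of_apply_eq_self {u v : V} (hu : σ u = u) (hv : σ v = v) : u = v := by
  by_contra huv
  have := h huv
  rw [hu, hv] at this
  tauto

lemma even_of_zpow_apply_eq_self {u v : V} (huv : u ≠ v) {t : ℤ} (hu : (σ ^ t) u = u)
    (hv : (σ ^ t) v = v) : Even t := by
  have := h.adj_zpow_iff t huv
  rw [hu, hv] at this
  tauto

lemma even_of_zpow_apply_swap {u v : V} (huv : u ≠ v) {t : ℤ} (hu : (σ ^ t) u = v)
    (hv : (σ ^ t) v = u) : Even t := by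
  have := h.adj_zpow_iff t huv
  rw [hu, hv, G.adj_comm] at this
  tauto

section Cycle

variable {s : Finset V} (hs : σ.IsCycleOn s)
include hs

lemma four_dvd_card (hnt : s.Nontrivial) : 4 ∣ #s := by
  obtain ⟨a, ha⟩ := hnt.nonempty
  have hσa : a ≠ σ a := (hs.apply_ne hnt ha).symm
  have hcard : 1 < #s := one_lt_card_iff_nontrivial.mpr hnt
  obtain ⟨n, hn⟩ : Even #s := by
    have := h.even_of_zpow_apply_eq_self hσa (t := #s) (by simpa using hs.pow_card_apply ha)
      (by simpa using hs.pow_card_apply (hs.apply_mem_iff.mpr ha))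
    exact_mod_cast this
  obtain ⟨l, hl⟩ : Even n := by
    have hne : a ≠ (σ ^ (n : ℤ)) a := by
      rw [Ne, eq_comm, hs.zpow_apply_eq ha]
      intro hdvd
      have := Int.le_of_dvd (by omega) hdvd
      omega
    have := h.even_of_zpow_apply_swap hne rfl (by
      rw [← Perm.mul_apply, ← zpow_add, hs.zpow_apply_eq ha]; exact ⟨1, by omega⟩)
    exact_mod_cast this
  exact ⟨l, by omega⟩

lemma inducesP4_zpow_apply {a : V} (ha : a ∈ s) (heven : Even #s) {i r q : ℤ} (hi : Even i)
    (hr : Odd r) (hq : Even q) (hq₀ : 0 < q) (hqs : q < #s)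
    (hadd : G.Adj a ((σ ^ (r + q)) a) ↔ ¬ G.Adj a ((σ ^ r) a))
    (hsub : G.Adj a ((σ ^ (r - q)) a) ↔ ¬ G.Adj a ((σ ^ r) a)) :
    InducesP4 G {(σ ^ i) a, (σ ^ (i + r)) a, (σ ^ (i + q)) a, (σ ^ (i + q + r)) a} := by
  have hodd : ∀ t : ℤ, Odd t → ¬ (#s : ℤ) ∣ t :=
    fun _ => Int.not_dvd_of_even_of_odd (by exact_mod_cast heven)
  have hq' : ¬ (#s : ℤ) ∣ q := fun hdvd => by have := Int.le_of_dvd hq₀ hdvd; omega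
  have hne : ∀ {j k d : ℤ}, k - j = d → ¬ (#s : ℤ) ∣ d → (σ ^ j) a ≠ (σ ^ k) a := by
    rintro j k d rfl hd
    rwa [Ne, hs.zpow_apply_eq_zpow_apply ha, Int.modEq_iff_dvd]
  have hadj : ∀ {j k d : ℤ}, k - j = d → ¬ (#s : ℤ) ∣ d →
      (G.Adj ((σ ^ j) a) ((σ ^ k) a) ↔ (G.Adj a ((σ ^ d) a) ↔ Even j)) := by
    rintro j k d rfl hd
    exact h.adj_zpow_apply_zpow_apply a (hne rfl hd)
  have hiq : Even (i + q) := hi.add hq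
  have hir : ¬ Even (i + r) := Int.not_even_iff_odd.mpr (hi.add_odd hr)
  have hrq : Odd (r + q) := hr.add_even hq
  have hr_q : Odd (r - q) := hr.sub_even hq
  refine inducesP4_of_adj_iff (hne (by ring) (hodd r hr)) (hne (by ring) hq')
    (hne (by ring) (hodd _ hrq)) (hne (d := q - r) (by ring) (hodd _ (hq.sub_odd hr)))
    (hne (by ring) hq') (hne (by ring) (hodd r hr)) ?_ ?_ ?_ ?_
  · rw [hadj (j := i) (by ring) (hodd r hr), hadj (by ring) (hodd r hr)]
    simp [hi, hiq]
  · rw [hadj (j := i) (by ring) (hodd _ hrq), hadj (by ring) (hodd r hr)]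
    simpa [hi] using hadd
  · rw [G.adj_comm, hadj (by ring) (hodd _ hr_q), hadj (j := i) (by ring) (hodd r hr)]
    simpa [hi, hiq] using hsub
  · rw [hadj (j := i + r) (by ring) hq', hadj (j := i) (by ring) hq']
    simp [hi, hir]

lemma exists_finpartition_inducesP4 [DecidableEq V] (hnt : s.Nontrivial) :
    ∃ P : Finpartition s, ∀ p ∈ P.parts, InducesP4 G p := by
  obtain ⟨a, ha⟩ := hnt.nonempty
  obtain ⟨m, hm⟩ := h.four_dvd_card hs hnt
  have heven : Even #s := ⟨2 * m, by omega⟩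
  have hm₀ : 0 < m := by have := one_lt_card_iff_nontrivial.mpr hnt; omega
  have hper : ∀ t : ℤ, Odd t → (G.Adj a ((σ ^ (t + 4 * m)) a) ↔ G.Adj a ((σ ^ t) a)) := by
    intro t _
    rw [(hs.zpow_apply_eq_zpow_apply ha).mpr
      (Int.modEq_iff_dvd.mpr ⟨-1, by rw [hm]; push_cast; ring⟩)]
  have hneg : ∀ t : ℤ, Odd t → (G.Adj a ((σ ^ (-t)) a) ↔ ¬ G.Adj a ((σ ^ t) a)) := by
    intro t ht
    have hne : (σ ^ (-t)) a ≠ (σ ^ (0 : ℤ)) a := by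
      rw [Ne, hs.zpow_apply_eq_zpow_apply ha, Int.modEq_iff_dvd, zero_sub, neg_neg]
      exact Int.not_dvd_of_even_of_odd (by exact_mod_cast heven) ht
    have := h.adj_zpow_apply_zpow_apply a hne
    rw [zpow_zero, Perm.one_apply, G.adj_comm, zero_sub, neg_neg, even_neg] at this
    rw [this, iff_false_intro (Int.not_even_iff_odd.mpr ht), iff_false]
  obtain ⟨r, p, hr, hp, ⟨L, rfl⟩, hadd, hsub⟩ :=
    exists_odd_flip_add_sub (fun t => G.Adj a ((σ ^ t) a)) m hm₀ hper hneg
  -- `Φ ((α, β), (ε, δ)) = x (i + 2 p ε + r δ)` with base `i = 2 β + 4 p α`, where `x j = (σ ^ j) a`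
  let Φ : (Fin L × Fin p) × (Fin 2 × Fin 2) → V := fun c =>
    (σ ^ (2 * (finProdFinEquiv (finProdFinEquiv (c.1.1, c.2.1), c.1.2) : ℕ) + r * c.2.2 : ℤ)) a
  have hΦ : Injective Φ := by
    rintro ⟨⟨α, β⟩, ε, δ⟩ ⟨⟨α', β'⟩, ε', δ'⟩ hΦ
    have hdvd := ((hs.zpow_apply_eq_zpow_apply ha).mp hΦ.symm).dvd
    rw [hm] at hdvd
    have hlt : ∀ x : Fin (L * 2 * p), (x : ℕ) < 2 * (p * L) :=
      fun x => x.is_lt.trans_eq (by ring)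
    obtain ⟨hy, hδ⟩ := eq_of_dvd_two_mul_add_odd_mul hr (hlt _) (hlt _) δ.is_lt δ'.is_lt
      (by exact_mod_cast hdvd)
    obtain ⟨hαε, rfl⟩ := Prod.mk.inj (finProdFinEquiv.injective (Fin.ext hy))
    obtain ⟨rfl, rfl⟩ := Prod.mk.inj (finProdFinEquiv.injective hαε)
    rw [Fin.ext hδ]
  have hΦs : univ.image Φ = s := by
    refine eq_of_subset_of_card_le (fun v hv => ?_) ?_
    · obtain ⟨c, -, rfl⟩ := mem_image.mp hv
      exact (hs.1.perm_zpow _).mapsTo ha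
    · rw [card_image_of_injective _ hΦ, hm]
      simp only [card_univ, Fintype.card_prod, Fintype.card_fin]
      exact le_of_eq (by ring)
  obtain ⟨P, hP⟩ := Finpartition.exists_of_injective_prod hΦ
  refine ⟨P.copy hΦs, fun q hq => ?_⟩
  obtain ⟨⟨α, β⟩, rfl⟩ := hP q hq
  have := h.inducesP4_zpow_apply hs ha heven (i := 2 * (β + p * (2 * α))) (q := 2 * p)
    (even_two_mul _) hr (even_two_mul _) (by omega)
    (by rw [hm]; have := α.pos; push_cast; nlinarith) hadd hsub
  convert this using 1
  have e : 2 * ((β : ℤ) + p * (1 + 2 * α)) = 2 * (β + p * (2 * α)) + 2 * p := by ring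
  ext v
  simp [Φ, Fin.exists_fin_two, e]
  tauto

end Cycle

variable [Fintype V] [DecidableEq V]

lemma apply_ne_self (hV : 4 ∣ Fintype.card V) (v : V) : σ v ≠ v := by
  have h4 : 4 ∣ #σ.support := by
    rw [← Perm.sum_cycleType]
    refine Multiset.dvd_sum fun n hn => ?_
    rw [Perm.cycleType_def, Multiset.mem_map] at hn
    obtain ⟨c, hc, rfl⟩ := hn
    exact h.four_dvd_card (Perm.isCycleOn_support_of_mem_cycleFactorsFinset hc)
      (one_lt_card_iff_nontrivial.mp
        (Perm.mem_cycleFactorsFinset_iff.mp hc).1.two_le_card_support)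
  have hfix : #σ.supportᶜ ≤ 1 := card_le_one.mpr fun u hu w hw =>
    h.eq_of_apply_eq_self (by simpa using hu) (by simpa using hw)
  intro hv
  have hpos : 0 < #σ.supportᶜ := card_pos.mpr ⟨v, by simpa using hv⟩
  have := card_compl σ.support
  omega

lemma exists_finpartition_univ_inducesP4 (hfix : ∀ v, σ v ≠ v) :
    ∃ P : Finpartition (univ : Finset V), ∀ p ∈ P.parts, InducesP4 G p := by
  classical
  have horbit : ∀ O ∈ (Finpartition.ofSetoid (Perm.SameCycle.setoid σ)).parts,
      ∃ Q : Finpartition O, ∀ p ∈ Q.parts, InducesP4 G p := by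
    intro O hO
    rw [Finpartition.ofSetoid, Finpartition.ofSetSetoid_parts, mem_image] at hO
    obtain ⟨a, -, rfl⟩ := hO
    have hO : {b ∈ (univ : Finset V) | Perm.SameCycle.setoid σ a b} = (σ.cycleOf a).support := by
      ext b
      rw [mem_filter, Perm.mem_support_cycleOf_iff' (hfix a)]
      exact ⟨And.right, fun hb => ⟨mem_univ b, hb⟩⟩
    rw [hO]
    exact h.exists_finpartition_inducesP4 (σ.isCycleOn_support_cycleOf a)
      (one_lt_card_iff_nontrivial.mp (Perm.two_le_card_support_cycleOf_iff.mpr (hfix a)))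
  choose Q hQ using horbit
  refine ⟨(Finpartition.ofSetoid _).bind Q, fun p hp => ?_⟩
  obtain ⟨O, hO, hp⟩ := Finpartition.mem_bind.mp hp
  exact hQ O hO p hp

end IsAntimorphism

end SimpleGraph

/-- Gibbs' theorem: a self-complementary graph on `4k` vertices can be partitioned
into `k` sets each inducing a path on 4 vertices. -/
theorem gibbs_theorem {V : Type*} [Fintype V] (G : SimpleGraph V)
    (hsc : SelfComplementary G) (k : ℕ) (hcard : Fintype.card V = 4 * k) :
    ∃ P : Finset (Finset V), P.card = k ∧ (∀ p ∈ P, InducesP4 G ↑p) ∧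
      (∀ v : V, ∃! p, p ∈ P ∧ v ∈ p) := by
  classical
  obtain ⟨φ⟩ := hsc
  have h := φ.isAntimorphism
  obtain ⟨P, hP⟩ :=
    h.exists_finpartition_univ_inducesP4 (h.apply_ne_self (hcard ▸ dvd_mul_right 4 k))
  refine ⟨P.parts, ?_, hP, fun v => P.existsUnique_mem (mem_univ v)⟩
  have hsum := P.sum_card_parts
  rw [sum_congr rfl fun p hp => (hP p hp).card_eq, sum_const, smul_eq_mul, card_univ,
    hcard] at hsum
  omega
end

section
/- If (A,B,C,D) is a symmetric partition of a self-complementary graph G arising from an antimorphism τ mapping A→B→C→D→A (so that τ^4 stabilizes each part), then for all indices i, j, l the set {a_i, b_{i+j}, c_l, d_{l+j}} induces a P_4, where a_m = τ^{4(m-1)}(a_1) etc. -/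
def IsSymmetricPartitionOn {V : Type*} (G : SimpleGraph V) (A B C D : Set V) : Prop :=
  A.Nonempty ∧ B.Nonempty ∧ C.Nonempty ∧ D.Nonempty ∧
  Disjoint A B ∧ Disjoint A C ∧ Disjoint A D ∧ Disjoint B C ∧ Disjoint B D ∧ Disjoint C D ∧
  (∀ x ∈ A, ∀ y ∈ B, G.Adj x y) ∧ (∀ x ∈ C, ∀ y ∈ D, G.Adj x y) ∧
  (∀ x ∈ A, ∀ y ∈ D, ¬ G.Adj x y) ∧ (∀ x ∈ B, ∀ y ∈ C, ¬ G.Adj x y)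

/-- A symmetric partition of the whole graph `G`. -/
def IsSymmetricPartition {V : Type*} (G : SimpleGraph V) (A B C D : Set V) : Prop :=
  IsSymmetricPartitionOn G A B C D ∧ A ∪ B ∪ C ∪ D = Set.univ

/-!
An antimorphism applied twice is an automorphism, so `τ ^ 4`, which shifts every index by one,
preserves adjacency; hence `a (i + j) ~ c (l + j)` iff `a i ~ c l`. Applying `τ` once more,
`b (i + j) ~ d (l + j)` iff `a i ≁ c l`. Together with the edges `ab`, `cd` and non-edges `ad`,
`bc` forced by the partition, exactly one of the chords `ac`, `bd` is present, which is a `P₄`.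
-/

theorem IsAntimorphism.adj_sq_apply_iff {V : Type*} {G : SimpleGraph V} {τ : Equiv.Perm V}
    (hτ : IsAntimorphism G τ) (x y : V) : G.Adj ((τ ^ 2) x) ((τ ^ 2) y) ↔ G.Adj x y := by
  obtain rfl | hxy := eq_or_ne x y
  · simp
  rw [hτ x y hxy, hτ (τ x) (τ y) (τ.injective.ne hxy), not_not, sq, Equiv.Perm.mul_apply,
    Equiv.Perm.mul_apply]

theorem IsAntimorphism.adj_pow_four_apply_iff {V : Type*} {G : SimpleGraph V}
    {τ : Equiv.Perm V} (hτ : IsAntimorphism G τ) (x y : V) :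
    G.Adj ((τ ^ 4) x) ((τ ^ 4) y) ↔ G.Adj x y := by
  rw [show τ ^ 4 = τ ^ 2 * τ ^ 2 by rw [← pow_add], Equiv.Perm.mul_apply, Equiv.Perm.mul_apply,
    hτ.adj_sq_apply_iff, hτ.adj_sq_apply_iff]

theorem SimpleGraph.adj_zpow_apply_iff {V : Type*} {G : SimpleGraph V} {f : Equiv.Perm V}
    (hf : ∀ x y, G.Adj (f x) (f y) ↔ G.Adj x y) (t : ℤ) (x y : V) :
    G.Adj ((f ^ t) x) ((f ^ t) y) ↔ G.Adj x y := by
  induction t using Int.induction_on generalizing x y with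
  | zero => simp
  | succ t ih => rw [zpow_add_one, Equiv.Perm.mul_apply, Equiv.Perm.mul_apply, ih, hf]
  | pred t ih =>
    have h z : f ((f ^ (-(t : ℤ) - 1)) z) = (f ^ (-(t : ℤ))) z := by
      rw [← Equiv.Perm.mul_apply, ← zpow_one_add, add_sub_cancel]
    rw [← hf, h, h, ih]

theorem Equiv.Perm.zpow_apply_of_apply_eq_add_one {V R : Type*} [AddCommGroupWithOne R]
    {f : Equiv.Perm V} {u : R → V} (hf : ∀ m, f (u m) = u (m + 1)) (t : ℤ) (m : R) :
    (f ^ t) (u m) = u (m + t) := by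
  induction t using Int.induction_on generalizing m with
  | zero => simp
  | succ t ih =>
    rw [add_comm, zpow_one_add, Equiv.Perm.mul_apply, ih, hf]
    push_cast; abel_nf
  | pred t ih =>
    have h : f⁻¹ (u m) = u (m - 1) := by rw [Equiv.Perm.inv_eq_iff_eq, hf, sub_add_cancel]
    rw [zpow_sub_one, Equiv.Perm.mul_apply, h, ih]
    push_cast; abel_nf

theorem inducesP4_of_adj_iff_not_adj {V : Type*} {G : SimpleGraph V} {a b c d : V}
    (hab : a ≠ b) (hac : a ≠ c) (had : a ≠ d) (hbc : b ≠ c) (hbd : b ≠ d) (hcd : c ≠ d)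
    (hAB : G.Adj a b) (hCD : G.Adj c d) (hAD : ¬ G.Adj a d) (hBC : ¬ G.Adj b c)
    (hchord : G.Adj b d ↔ ¬ G.Adj a c) : InducesP4 G {a, b, c, d} := by
  by_cases hAC : G.Adj a c
  · refine ⟨b, a, c, d, ?_, hab.symm, hbc, hbd, hac, had, hcd, hAB.symm, hAC, hCD, hBC,
      hchord.not_left.mpr hAC, hAD⟩
    ext; simp only [Set.mem_insert_iff, Set.mem_singleton_iff]; tauto
  · refine ⟨a, b, d, c, ?_, hab, had, hac, hbd, hbc, hcd.symm, hAB, hchord.mpr hAC, hCD.symm,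
      hAD, hAC, hBC⟩
    ext; simp only [Set.mem_insert_iff, Set.mem_singleton_iff]; tauto

theorem symmetricPartition_inducesP4_general {V : Type*} (G : SimpleGraph V) (τ : Equiv.Perm V)
    (hτ : IsAntimorphism G τ) (k : ℕ) (a b c d : ZMod k → V)
    (hinj : Function.Injective (fun p : Fin 4 × ZMod k => ![a, b, c, d] p.1 p.2))
    (hab : ∀ i, τ (a i) = b i) (hbc : ∀ i, τ (b i) = c i)
    (hcd : ∀ i, τ (c i) = d i) (hda : ∀ i, τ (d i) = a (i + 1))
    (hsym : IsSymmetricPartition G (Set.range a) (Set.range b) (Set.range c) (Set.range d)) :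
    ∀ i j l : ZMod k, InducesP4 G {a i, b (i + j), c l, d (l + j)} := by
  intro i j l
  obtain ⟨⟨-, -, -, -, -, -, -, -, -, -, hAB, hCD, hAD, hBC⟩, -⟩ := hsym
  have hne (p q : Fin 4) (hpq : p ≠ q) (m n : ZMod k) : ![a, b, c, d] p m ≠ ![a, b, c, d] q n :=
    hinj.ne (a₁ := (p, m)) (a₂ := (q, n)) (by simp [hpq])
  have shift_a m : (τ ^ 4) (a m) = a (m + 1) := by simp [pow_succ, hab, hbc, hcd, hda]
  have shift_c m : (τ ^ 4) (c m) = c (m + 1) := by simp [pow_succ, hab, hbc, hcd, hda]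
  obtain ⟨t, rfl⟩ := ZMod.intCast_surjective j
  have hAC : G.Adj (a (i + t)) (c (l + t)) ↔ G.Adj (a i) (c l) := by
    rw [← Equiv.Perm.zpow_apply_of_apply_eq_add_one shift_a,
      ← Equiv.Perm.zpow_apply_of_apply_eq_add_one shift_c]
    exact SimpleGraph.adj_zpow_apply_iff hτ.adj_pow_four_apply_iff t _ _
  have hBD : G.Adj (b (i + t)) (d (l + t)) ↔ ¬ G.Adj (a i) (c l) := by
    rw [← hab, ← hcd, ← (hτ (a (i + t)) (c (l + t)) (hne 0 2 (by decide) _ _)).not_left,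
      hAC]
  exact inducesP4_of_adj_iff_not_adj (hne 0 1 (by decide) _ _)
    (hne 0 2 (by decide) _ _) (hne 0 3 (by decide) _ _) (hne 1 2 (by decide) _ _)
    (hne 1 3 (by decide) _ _) (hne 2 3 (by decide) _ _)
    (hAB _ ⟨_, rfl⟩ _ ⟨_, rfl⟩) (hCD _ ⟨_, rfl⟩ _ ⟨_, rfl⟩) (hAD _ ⟨_, rfl⟩ _ ⟨_, rfl⟩)
    (hBC _ ⟨_, rfl⟩ _ ⟨_, rfl⟩) hBD

theorem symmetricPartition_inducesP4 {V : Type*} (G : SimpleGraph V) (τ : Equiv.Perm V)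
    (hτ : IsAntimorphism G τ) (k : ℕ) (hk : 1 ≤ k) (a b c d : ZMod k → V)
    (hinj : Function.Injective (fun p : Fin 4 × ZMod k => ![a, b, c, d] p.1 p.2))
    (hab : ∀ i, τ (a i) = b i) (hbc : ∀ i, τ (b i) = c i)
    (hcd : ∀ i, τ (c i) = d i) (hda : ∀ i, τ (d i) = a (i + 1))
    (hsym : IsSymmetricPartition G (Set.range a) (Set.range b) (Set.range c) (Set.range d)) :
    ∀ i j l : ZMod k, InducesP4 G {a i, b (i + j), c l, d (l + j)} :=
  symmetricPartition_inducesP4_general G τ hτ k a b c d hinj hab hbc hcd hda hsym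
end

section
/- Let G be a self-complementary graph with antimorphism τ = (a b c d)(a_1 b_1 c_1 d_1 ... a_k b_k c_k d_k), where the edges of G among {a,b,c,d} are exactly ab, ac, cd. If a is adjacent to no vertex outside {a,b,c,d}, then {a_1, a, b, c, d} induces a C_5 in G. -/
/-- `v` lists the vertices of an induced 5-cycle of `G`, in cyclic order. -/
def IsInducedC5 {V : Type*} (G : SimpleGraph V) (v : Fin 5 → V) : Prop :=
  Function.Injective v ∧
    ∀ i j : Fin 5, i ≠ j → (G.Adj (v i) (v j) ↔ (j = i + 1 ∨ i = j + 1))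

open Set

section

variable {V : Type*} {G : SimpleGraph V}

namespace IsAntimorphism

variable {τ : Equiv.Perm V}

theorem adj_apply_iff_not_adj_symm_apply (hτ : IsAntimorphism G τ) {x v : V}
    (h : x ≠ τ.symm v) : G.Adj (τ x) v ↔ ¬ G.Adj x (τ.symm v) := by
  rw [hτ x _ h, τ.apply_symm_apply, not_not]

theorem adj_apply_compl_iff (hτ : IsAntimorphism G τ) {s : Set V} (hs : MapsTo τ s s)
    {x : V} (hx : x ∈ s) {P : Prop} (h : ∀ v ∉ s, G.Adj x v ↔ P) :
    ∀ v ∉ s, G.Adj (τ x) v ↔ ¬ P := fun v hv => by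
  have hv' : τ.symm v ∉ s := fun hsv => hv (τ.apply_symm_apply v ▸ hs hsv)
  rw [hτ.adj_apply_iff_not_adj_symm_apply (ne_of_mem_of_not_mem hx hv'), h _ hv']

end IsAntimorphism

theorem IsInducedC5.of_adj_iff {v : Fin 5 → V}
    (h : ∀ i j : Fin 5, i ≠ j → (G.Adj (v i) (v j) ↔ (j = i + 1 ∨ i = j + 1))) :
    IsInducedC5 G v := by
  refine ⟨fun i j hvij => ?_, h⟩
  by_contra hij
  -- two distinct vertices of a 5-cycle are told apart by a third one adjacent to exactly one
  have separating : ∀ i j : Fin 5, i ≠ j → ∃ k, k ≠ i ∧ k ≠ j ∧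
      ((i = k + 1 ∨ k = i + 1) ↔ ¬ (j = k + 1 ∨ k = j + 1)) := by decide
  obtain ⟨k, hki, hkj, hk⟩ := separating i j hij
  have := (h k i hki).symm.trans ((congrArg (G.Adj (v k)) hvij).to_iff.trans (h k j hkj))
  exact (iff_not_self (hk.symm.trans this).symm).elim

theorem isInducedC5_of_adj_of_not_adj {v₀ v₁ v₂ v₃ v₄ : V}
    (h₀₁ : G.Adj v₀ v₁) (h₁₂ : G.Adj v₁ v₂) (h₂₃ : G.Adj v₂ v₃) (h₃₄ : G.Adj v₃ v₄)
    (h₄₀ : G.Adj v₄ v₀) (n₀₂ : ¬ G.Adj v₀ v₂) (n₀₃ : ¬ G.Adj v₀ v₃) (n₁₃ : ¬ G.Adj v₁ v₃)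
    (n₁₄ : ¬ G.Adj v₁ v₄) (n₂₄ : ¬ G.Adj v₂ v₄) :
    IsInducedC5 G ![v₀, v₁, v₂, v₃, v₄] := by
  refine IsInducedC5.of_adj_iff fun i j hij => ?_
  fin_cases i <;> fin_cases j <;> simp_all [G.adj_comm]

end

theorem case_Na_empty_general {V : Type*} (G : SimpleGraph V) (τ : Equiv.Perm V)
    (hτ : IsAntimorphism G τ)
    (a b c d : V)
    (h1 : τ a = b) (h2 : τ b = c) (h3 : τ c = d) (h4 : τ d = a)
    (k : ℕ) (a' b' c' d' : ZMod k → V)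
    (hdisj : ∀ p : Fin 4 × ZMod k, ![a', b', c', d'] p.1 p.2 ∉ ({a, b, c, d} : Set V))
    (eab : G.Adj a b) (eac : G.Adj a c) (ecd : G.Adj c d)
    (nad : ¬ G.Adj a d) (nbc : ¬ G.Adj b c) (nbd : ¬ G.Adj b d)
    (hNa : ∀ v : V, v ∉ ({a, b, c, d} : Set V) → ¬ G.Adj a v) :
    ∃ v : Fin 5 → V, IsInducedC5 G v ∧ Set.range v = {a' 0, a, b, c, d} := by
  set S : Set V := {a, b, c, d}
  have hS : MapsTo τ S S := by
    rintro x (rfl | rfl | rfl | rfl) <;> simp [S, h1, h2, h3, h4]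
  have ha : ∀ v ∉ S, G.Adj a v ↔ False := fun v hv => iff_false_intro (hNa v hv)
  have hb : ∀ v ∉ S, G.Adj b v ↔ True := by
    simpa only [h1, not_false_eq_true] using hτ.adj_apply_compl_iff hS (by simp [S]) ha
  have hc : ∀ v ∉ S, G.Adj c v ↔ False := by
    simpa only [h2, not_true_eq_false] using hτ.adj_apply_compl_iff hS (by simp [S]) hb
  have hd : ∀ v ∉ S, G.Adj d v ↔ True := by
    simpa only [h3, not_false_eq_true] using hτ.adj_apply_compl_iff hS (by simp [S]) hc
  have ha₁ : a' 0 ∉ S := hdisj (0, 0)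
  refine ⟨![a, b, a' 0, d, c], isInducedC5_of_adj_of_not_adj eab ((hb _ ha₁).2 trivial)
    ((hd _ ha₁).2 trivial).symm ecd.symm eac.symm (hNa _ ha₁) nad nbd nbc
    (fun h => (hc _ ha₁).1 h.symm), ?_⟩
  ext x
  simp only [Matrix.range_cons, Matrix.range_empty, union_empty, singleton_union,
    mem_insert_iff, mem_singleton_iff, S]
  tauto

theorem case_Na_empty {V : Type*} (G : SimpleGraph V) (τ : Equiv.Perm V)
    (hτ : IsAntimorphism G τ)
    (a b c d : V) (habcd : [a, b, c, d].Nodup)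
    (h1 : τ a = b) (h2 : τ b = c) (h3 : τ c = d) (h4 : τ d = a)
    (k : ℕ) (hk : 1 ≤ k) (a' b' c' d' : ZMod k → V)
    (hinj : Function.Injective (fun p : Fin 4 × ZMod k => ![a', b', c', d'] p.1 p.2))
    (hab : ∀ i, τ (a' i) = b' i) (hbc : ∀ i, τ (b' i) = c' i)
    (hcd : ∀ i, τ (c' i) = d' i) (hda : ∀ i, τ (d' i) = a' (i + 1))
    (hdisj : ∀ p : Fin 4 × ZMod k, ![a', b', c', d'] p.1 p.2 ∉ ({a, b, c, d} : Set V))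
    (hcover : ∀ v : V, v ∈ ({a, b, c, d} : Set V) ∨
      ∃ p : Fin 4 × ZMod k, ![a', b', c', d'] p.1 p.2 = v)
    (eab : G.Adj a b) (eac : G.Adj a c) (ecd : G.Adj c d)
    (nad : ¬ G.Adj a d) (nbc : ¬ G.Adj b c) (nbd : ¬ G.Adj b d)
    (hNa : ∀ v : V, v ∉ ({a, b, c, d} : Set V) → ¬ G.Adj a v) :
    ∃ v : Fin 5 → V, IsInducedC5 G v ∧ Set.range v = {a' 0, a, b, c, d} :=
  case_Na_empty_general G τ hτ a b c d h1 h2 h3 h4 k a' b' c' d' hdisj eab eac ecd nad nbc nbd hNa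
end

section
/- Let G be a self-complementary graph with antimorphism τ having a cycle of length 4k: (a_1 b_1 c_1 d_1 ... a_k b_k c_k d_k), and let A, B, C, D be the corresponding sets of a's, b's, c's, d's. If every vertex of A is adjacent to every vertex of B, then (A,B,C,D) is a symmetric partition of the induced subgraph G[A∪B∪C∪D]. -/
theorem Set.disjoint_range_of_injective_uncurry {ι α β : Type*} {f : ι → α → β}
    (hf : Function.Injective (Function.uncurry f)) {p q : ι} (hpq : p ≠ q) :
    Disjoint (Set.range (f p)) (Set.range (f q)) :=
  Set.disjoint_range_iff.2 fun i j h => hpq (congrArg Prod.fst (hf (a₁ := (p, i)) (a₂ := (q, j)) h))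

namespace IsAntimorphism

variable {V ι κ : Type*} {G : SimpleGraph V} {τ : Equiv.Perm V}

theorem not_adj_apply_of_adj (hτ : IsAntimorphism G τ) {x y : V} (h : G.Adj x y) :
    ¬ G.Adj (τ x) (τ y) :=
  (hτ x y h.ne).1 h

theorem adj_apply_of_not_adj (hτ : IsAntimorphism G τ) {x y : V} (hxy : x ≠ y)
    (h : ¬ G.Adj x y) : G.Adj (τ x) (τ y) :=
  not_not.1 (mt (hτ x y hxy).2 h)

variable {f f' : ι → V} {g g' : κ → V}

theorem forall_not_adj_of_forall_adj (hτ : IsAntimorphism G τ) (hf : ∀ i, τ (f i) = f' i)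
    (hg : ∀ j, τ (g j) = g' j) (h : ∀ i j, G.Adj (f i) (g j)) (i : ι) (j : κ) :
    ¬ G.Adj (f' i) (g' j) := by
  rw [← hf, ← hg]
  exact hτ.not_adj_apply_of_adj (h i j)

theorem forall_adj_of_forall_not_adj (hτ : IsAntimorphism G τ)
    (hfg : Disjoint (Set.range f) (Set.range g)) (hf : ∀ i, τ (f i) = f' i)
    (hg : ∀ j, τ (g j) = g' j) (h : ∀ i j, ¬ G.Adj (f i) (g j)) (i : ι) (j : κ) :
    G.Adj (f' i) (g' j) := by
  rw [← hf, ← hg]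
  exact hτ.adj_apply_of_not_adj (Set.disjoint_range_iff.1 hfg i j) (h i j)

end IsAntimorphism

theorem all_edges_AB_symmetricPartition_general {V : Type*} (G : SimpleGraph V) (τ : Equiv.Perm V)
    (hτ : IsAntimorphism G τ) (k : ℕ) (a b c d : ZMod k → V)
    (hinj : Function.Injective (fun p : Fin 4 × ZMod k => ![a, b, c, d] p.1 p.2))
    (hab : ∀ i, τ (a i) = b i) (hbc : ∀ i, τ (b i) = c i)
    (hcd : ∀ i, τ (c i) = d i) (hda : ∀ i, τ (d i) = a (i + 1))
    (hAB : ∀ i j : ZMod k, G.Adj (a i) (b j)) :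
    IsSymmetricPartitionOn G (Set.range a) (Set.range b) (Set.range c) (Set.range d) := by
  have hdisj {p q : Fin 4} (hpq : p ≠ q) := Set.disjoint_range_of_injective_uncurry hinj hpq
  have hBC := hτ.forall_not_adj_of_forall_adj hab hbc hAB
  have hCD := hτ.forall_adj_of_forall_not_adj (hdisj (p := 1) (q := 2) (by decide)) hbc hcd hBC
  have hDA := hτ.forall_not_adj_of_forall_adj hcd hda hCD
  have hAD (i j : ZMod k) : ¬ G.Adj (a i) (d j) := fun h =>
    hDA j (i - 1) (by rwa [sub_add_cancel, G.adj_comm])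
  refine ⟨Set.range_nonempty a, Set.range_nonempty b, Set.range_nonempty c, Set.range_nonempty d,
    hdisj (p := 0) (q := 1) (by decide), hdisj (p := 0) (q := 2) (by decide),
    hdisj (p := 0) (q := 3) (by decide), hdisj (p := 1) (q := 2) (by decide),
    hdisj (p := 1) (q := 3) (by decide), hdisj (p := 2) (q := 3) (by decide),
    ?_, ?_, ?_, ?_⟩ <;> simp only [Set.forall_mem_range]
  exacts [hAB, hCD, hAD, hBC]

theorem all_edges_AB_symmetricPartition {V : Type*} (G : SimpleGraph V) (τ : Equiv.Perm V)
    (hτ : IsAntimorphism G τ) (k : ℕ) (hk : 1 ≤ k) (a b c d : ZMod k → V)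
    (hinj : Function.Injective (fun p : Fin 4 × ZMod k => ![a, b, c, d] p.1 p.2))
    (hab : ∀ i, τ (a i) = b i) (hbc : ∀ i, τ (b i) = c i)
    (hcd : ∀ i, τ (c i) = d i) (hda : ∀ i, τ (d i) = a (i + 1))
    (hAB : ∀ i j : ZMod k, G.Adj (a i) (b j)) :
    IsSymmetricPartitionOn G (Set.range a) (Set.range b) (Set.range c) (Set.range d) :=
  all_edges_AB_symmetricPartition_general G τ hτ k a b c d hinj hab hbc hcd hda hAB
end

section
/- Let G be a self-complementary graph with an antimorphism τ = (a b c d)(a_1 b_1 c_1 d_1 ... a_k b_k c_k d_k) and let v ∈ {a,b,c,d} and H be one of the sets A = {a_i}, B = {b_i}, C = {c_i}, D = {d_i}. Then either v is adjacent to every vertex of H, or v is adjacent to no vertex of H. -/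
/-!
Two applications of an antimorphism complement adjacency twice, so `τ ^ 4` is an automorphism
of `G`. It fixes `v` and shifts each of the cycles `a', b', c', d'` by one step, so whether `v`
is adjacent to the `i`-th vertex of a cycle does not depend on `i`.
-/

theorem ZMod.iff_of_iff_add_one {k : ℕ} {P : ZMod k → Prop} (h : ∀ i, P i ↔ P (i + 1))
    (i j : ZMod k) : P i ↔ P j := by
  obtain ⟨n, hn⟩ := ZMod.intCast_surjective (j - i)
  rw [show j = i + n by rw [hn, add_sub_cancel]]
  clear hn
  induction n using Int.induction_on with
  | zero => simp
  | succ n ih => rw [ih, h, Int.cast_add, Int.cast_one, add_assoc]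
  | pred n ih =>
    rw [ih, h (i + ((-n - 1 : ℤ) : ZMod k)),
      show i + ((-n - 1 : ℤ) : ZMod k) + 1 = i + (-n : ℤ) by push_cast; ring]

namespace IsAntimorphism

variable {V : Type*} {G : SimpleGraph V} {τ : Equiv.Perm V}

theorem adj_sq_iff (hτ : IsAntimorphism G τ) (x y : V) :
    G.Adj ((τ ^ 2) x) ((τ ^ 2) y) ↔ G.Adj x y := by
  rcases eq_or_ne x y with rfl | hxy
  · simp
  · rw [hτ x y hxy, hτ (τ x) (τ y) (τ.injective.ne hxy), not_not, sq, Equiv.Perm.mul_apply,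
      Equiv.Perm.mul_apply]

theorem adj_pow_four_iff (hτ : IsAntimorphism G τ) (x y : V) :
    G.Adj ((τ ^ 4) x) ((τ ^ 4) y) ↔ G.Adj x y := by
  rw [show τ ^ 4 = τ ^ 2 * τ ^ 2 by rw [← pow_add], Equiv.Perm.mul_apply, Equiv.Perm.mul_apply,
    hτ.adj_sq_iff, hτ.adj_sq_iff]

end IsAntimorphism

theorem SimpleGraph.forall_adj_or_forall_not_adj_of_shift {V : Type*} {G : SimpleGraph V}
    {σ : V → V} (hσ : ∀ x y, G.Adj (σ x) (σ y) ↔ G.Adj x y) {v : V} (hv : σ v = v)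
    {k : ℕ} {f : ZMod k → V} (hf : ∀ i, σ (f i) = f (i + 1)) :
    (∀ x ∈ Set.range f, G.Adj v x) ∨ (∀ x ∈ Set.range f, ¬ G.Adj v x) := by
  have hstep : ∀ i, G.Adj v (f i) ↔ G.Adj v (f (i + 1)) := fun i => by
    rw [← hσ, hv, hf]
  by_cases h0 : G.Adj v (f 0)
  · exact .inl <| Set.forall_mem_range.2 fun i =>
      (ZMod.iff_of_iff_add_one (P := fun i => G.Adj v (f i)) hstep 0 i).1 h0
  · exact .inr <| Set.forall_mem_range.2 fun i hi =>
      h0 ((ZMod.iff_of_iff_add_one (P := fun i => G.Adj v (f i)) hstep i 0).1 hi)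

theorem fixed_cycle_sees_all_or_none_general {V : Type*} (G : SimpleGraph V) (τ : Equiv.Perm V)
    (hτ : IsAntimorphism G τ)
    (a b c d : V)
    (h1 : τ a = b) (h2 : τ b = c) (h3 : τ c = d) (h4 : τ d = a)
    (k : ℕ) (a' b' c' d' : ZMod k → V)
    (hab : ∀ i, τ (a' i) = b' i) (hbc : ∀ i, τ (b' i) = c' i)
    (hcd : ∀ i, τ (c' i) = d' i) (hda : ∀ i, τ (d' i) = a' (i + 1)) :
    ∀ v ∈ ({a, b, c, d} : Set V),
      ∀ H ∈ ({Set.range a', Set.range b', Set.range c', Set.range d'} : Set (Set V)),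
        (∀ x ∈ H, G.Adj v x) ∨ (∀ x ∈ H, ¬ G.Adj v x) := by
  have pow_four_apply (x : V) : (τ ^ 4) x = τ (τ (τ (τ x))) := by
    simp only [pow_succ, pow_zero, one_mul, Equiv.Perm.mul_apply]
  intro v hv H hH
  have hv_fixed : (τ ^ 4) v = v := by
    rcases hv with rfl | rfl | rfl | rfl <;> simp only [pow_four_apply, h1, h2, h3, h4]
  rcases hH with rfl | rfl | rfl | rfl <;>
    exact SimpleGraph.forall_adj_or_forall_not_adj_of_shift hτ.adj_pow_four_iff hv_fixed
      fun i => by simp only [pow_four_apply, hab, hbc, hcd, hda]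

theorem fixed_cycle_sees_all_or_none {V : Type*} (G : SimpleGraph V) (τ : Equiv.Perm V)
    (hτ : IsAntimorphism G τ)
    (a b c d : V) (habcd : [a, b, c, d].Nodup)
    (h1 : τ a = b) (h2 : τ b = c) (h3 : τ c = d) (h4 : τ d = a)
    (k : ℕ) (hk : 1 ≤ k) (a' b' c' d' : ZMod k → V)
    (hinj : Function.Injective (fun p : Fin 4 × ZMod k => ![a', b', c', d'] p.1 p.2))
    (hab : ∀ i, τ (a' i) = b' i) (hbc : ∀ i, τ (b' i) = c' i)
    (hcd : ∀ i, τ (c' i) = d' i) (hda : ∀ i, τ (d' i) = a' (i + 1))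
    (hdisj : ∀ p : Fin 4 × ZMod k, ![a', b', c', d'] p.1 p.2 ∉ ({a, b, c, d} : Set V)) :
    ∀ v ∈ ({a, b, c, d} : Set V),
      ∀ H ∈ ({Set.range a', Set.range b', Set.range c', Set.range d'} : Set (Set V)),
        (∀ x ∈ H, G.Adj v x) ∨ (∀ x ∈ H, ¬ G.Adj v x) :=
  fixed_cycle_sees_all_or_none_general G τ hτ a b c d h1 h2 h3 h4 k a' b' c' d' hab hbc hcd hda
end
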